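/- arXiv:1612.05837 — 3 statements merged into one kernel-verified Lean document; each statement's English description precedes it below -/
import Mathlib

section
/- Let Λ be a compact metric space and let f_n : Λ×ℝ^N → ℝ^N, n ∈ ℤ, be continuous maps that are differentiable with respect to the ℝ^N variable with derivative Df_n(λ,u) continuous in (λ,u), satisfying (A1): f_n(λ,0) = 0 for all n ∈ ℤ and λ ∈ Λ; (A2): for every compact set K ⊂ ℝ^N and every ε > 0 there exists δ > 0 such that sup_{n∈ℤ}‖f_n(λ,x) − f_n(μ,y)‖ + sup_{n∈ℤ}‖Df_n(λ,x) − Df_n(μ,y)‖ < ε for all (λ,x),(μ,y) ∈ Λ×K with d(λ,μ) + ‖x−y‖ < δ; and sup_{(n,λ)∈ℤ×Λ} ‖Df_n(λ,0)‖ < ∞. For λ ∈ Λ let F_λ : c₀(ℝ^N) → c₀(ℝ^N) be given by (F_λ x)_n = x_{n+1} − f_n(λ,x_n), and for x ∈ c₀(ℝ^N) let T_λ(x) : c₀(ℝ^N) → c₀(ℝ^N) be the bounded linear operator (T_λ(x)y)_n = y_{n+1} − Df_n(λ,x_n)y_n. Then for every λ ∈ Λ, the map F_λ is Fréchet differentiable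 at every x ∈ c₀(ℝ^N) with derivative DF_λ(x) = T_λ(x), and the map (λ,x) ↦ T_λ(x) ∈ L(c₀(ℝ^N)) is continuous in the operator norm. -/
/-!
`F_λ` is the shift minus the Nemytskii operator `x ↦ (f_n(λ, x_n))_n`, and `T_λ(x)` is the shift
minus multiplication by the sequence `Df_n(λ, x_n)`. Hypothesis (A2) says that the families
`(f_n)` and `(Df_n)` are uniformly equicontinuous on `Λ × K` for every compact `K`. All
coordinates of `x ∈ c₀` lie in one ball, so the mean value inequality, applied coordinatewise,
bounds the remainder of the Nemytskii operator at `x` by `ε ‖h‖` uniformly in `n`; likewise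
`‖T_λ(x) - T_μ(y)‖ ≤ sup_n ‖Df_n(λ, x_n) - Df_n(μ, y_n)‖` is small for `(μ, y)` near `(λ, x)`.
Since `x_n → 0`, equicontinuity at `0` together with (A1) and the bound on `Df_n(λ, 0)` shows
that `f_n(λ, x_n) → 0` and that `Df_n(λ, x_n)` is bounded.
-/

open Filter

noncomputable section

/-- The space `c₀(ℝ^N)` of two-sided sequences in `ℝ^N` vanishing at `±∞`, with sup norm. -/
abbrev c0 (N : ℕ) := ZeroAtInftyContinuousMap ℤ (Fin N → ℝ)

open Topology Metric Set ZeroAtInfty Uniformity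

section Equicontinuity

variable {ι X Y Z : Type*}

theorem Metric.uniformEquicontinuousOn_iff [PseudoMetricSpace Y] [PseudoMetricSpace Z]
    {F : ι → Y → Z} {S : Set Y} :
    UniformEquicontinuousOn F S ↔
      ∀ ε > 0, ∃ δ > 0, ∀ x ∈ S, ∀ y ∈ S, dist x y < δ → ∀ i, dist (F i x) (F i y) < ε := by
  rw [(uniformity_basis_dist.inf_principal (S ×ˢ S)).uniformEquicontinuousOn_iff
    uniformity_basis_dist]
  simp only [mem_inter_iff, mem_prod, mem_ofPred_eq, and_imp]
  grind

theorem UniformEquicontinuousOn.comp_uniformContinuous [UniformSpace X] [UniformSpace Y]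
    [UniformSpace Z] {F : ι → Y → Z} {S : Set Y} {T : Set X} (hF : UniformEquicontinuousOn F S)
    {u : X → Y} (hu : UniformContinuous u) (hTS : MapsTo u T S) :
    UniformEquicontinuousOn (fun i => F i ∘ u) T := by
  have hu' : Tendsto (Prod.map u u) (𝓤 X ⊓ 𝓟 (T ×ˢ T)) (𝓤 Y ⊓ 𝓟 (S ×ˢ S)) :=
    hu.inf (tendsto_principal_principal.2 fun _ hp => ⟨hTS hp.1, hTS hp.2⟩)
  exact fun U hU => hu'.eventually (hF U hU)

theorem UniformEquicontinuousOn.equicontinuousAt [UniformSpace Y] [UniformSpace Z]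
    {F : ι → Y → Z} {S : Set Y} {y : Y} (hF : UniformEquicontinuousOn F S) (hS : S ∈ 𝓝 y) :
    EquicontinuousAt F y := fun U hU => by
  simpa only [nhdsWithin_eq_nhds.2 hS] using hF.equicontinuousOn y (mem_of_mem_nhds hS) U hU

theorem uniformEquicontinuousOn_prod_of_dist_add_dist_lt [PseudoMetricSpace X]
    [PseudoMetricSpace Y] [PseudoMetricSpace Z] {F : ι → X → Y → Z} {S : Set Y}
    (h : ∀ ε > 0, ∃ δ > 0, ∀ a b x y, x ∈ S → y ∈ S → dist a b + dist x y < δ →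
      ∀ i, dist (F i a x) (F i b y) < ε) :
    UniformEquicontinuousOn (fun i (p : X × Y) => F i p.1 p.2) (univ ×ˢ S) := by
  refine Metric.uniformEquicontinuousOn_iff.2 fun ε hε => ?_
  obtain ⟨δ, hδ, H⟩ := h ε hε
  refine ⟨δ / 2, half_pos hδ, fun p hp q hq hpq => H _ _ _ _ hp.2 hq.2 ?_⟩
  rw [Prod.dist_eq, max_lt_iff] at hpq
  linarith

theorem EquicontinuousAt.eventually_dist_apply_lt [TopologicalSpace Y] [PseudoMetricSpace Z]
    {F : ι → Y → Z} {y : Y} (hF : EquicontinuousAt F y) {l : Filter ι} {x : ι → Y}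
    (hx : Tendsto x l (𝓝 y)) {ε : ℝ} (hε : 0 < ε) : ∀ᶠ i in l, dist (F i (x i)) (F i y) < ε :=
  (hx.eventually (Metric.equicontinuousAt_iff_right.1 hF ε hε)).mono fun i hi => by
    rw [dist_comm]
    exact hi i

theorem EquicontinuousAt.bddAbove_range_norm_apply [TopologicalSpace Y] [SeminormedAddCommGroup Z]
    {F : ι → Y → Z} {y : Y} (hF : EquicontinuousAt F y) (hFy : BddAbove (range fun i => ‖F i y‖))
    {x : ι → Y} (hx : Tendsto x cofinite (𝓝 y)) : BddAbove (range fun i => ‖F i (x i)‖) := by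
  obtain ⟨M, hM⟩ := hFy
  refine IsBoundedUnder.bddAbove_range_of_cofinite (isBoundedUnder_of_eventually_le (a := M + 1) ?_)
  filter_upwards [hF.eventually_dist_apply_lt hx one_pos] with i hi
  calc ‖F i (x i)‖ ≤ ‖F i y‖ + ‖F i (x i) - F i y‖ := norm_le_norm_add_norm_sub' _ _
    _ ≤ M + 1 := add_le_add (hM ⟨i, rfl⟩) (by rw [← dist_eq_norm]; exact hi.le)

end Equicontinuity

theorem norm_image_add_sub_sub_le {E F : Type*} [NormedAddCommGroup E] [NormedSpace ℝ E]
    [NormedAddCommGroup F] [NormedSpace ℝ F] {g : E → F} {A : E → E →L[ℝ] F}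
    (hg : ∀ z, HasFDerivAt g (A z) z) {u v : E} {ε : ℝ}
    (hA : ∀ z ∈ closedBall u ‖v‖, ‖A z - A u‖ ≤ ε) : ‖g (u + v) - g u - A u v‖ ≤ ε * ‖v‖ := by
  simpa using (convex_closedBall u ‖v‖).norm_image_sub_le_of_norm_hasFDerivWithin_le'
    (fun z _ => (hg z).hasFDerivWithinAt) hA (mem_closedBall_self (norm_nonneg v))
    (by simp : u + v ∈ closedBall u ‖v‖)

namespace ZeroAtInftyContinuousMap

section Norm

variable {α E : Type*} [TopologicalSpace α] [SeminormedAddCommGroup E]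

theorem norm_apply_le (x : C₀(α, E)) (a : α) : ‖x a‖ ≤ ‖x‖ :=
  x.toBCF.norm_coe_le_norm a

theorem dist_apply_le (x y : C₀(α, E)) (a : α) : dist (x a) (y a) ≤ dist x y :=
  x.toBCF.dist_coe_le_dist (g := y.toBCF) a

theorem norm_le_of_forall_le {x : C₀(α, E)} {C : ℝ} (hC : 0 ≤ C) (h : ∀ a, ‖x a‖ ≤ C) :
    ‖x‖ ≤ C :=
  (BoundedContinuousFunction.norm_le hC).2 h

end Norm

section Discrete

variable {α E : Type*} [TopologicalSpace α] [DiscreteTopology α] [TopologicalSpace E] [Zero E]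

theorem tendsto_cofinite (x : C₀(α, E)) : Tendsto x cofinite (𝓝 0) := by
  simpa only [cocompact_eq_cofinite] using zero_at_infty x

def ofTendstoCofinite (g : α → E) (hg : Tendsto g cofinite (𝓝 0)) : C₀(α, E) :=
  ⟨⟨g, continuous_of_discreteTopology⟩, by rwa [cocompact_eq_cofinite]⟩

end Discrete

variable {E F : Type*} [NormedAddCommGroup E] [NormedAddCommGroup F]

theorem tendsto_cofinite_apply_apply_of_equicontinuousAt {g : ℤ → E → F} (hg0 : ∀ n, g n 0 = 0)
    (hg : EquicontinuousAt g 0) (x : C₀(ℤ, E)) : Tendsto (fun n => g n (x n)) cofinite (𝓝 0) :=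
  Metric.tendsto_nhds.2 fun ε hε => by
    simpa only [hg0] using hg.eventually_dist_apply_lt (tendsto_cofinite x) hε

def nemytskii (g : ℤ → E → F) (hg0 : ∀ n, g n 0 = 0) (hg : EquicontinuousAt g 0)
    (x : C₀(ℤ, E)) : C₀(ℤ, F) :=
  ofTendstoCofinite (fun n => g n (x n)) (tendsto_cofinite_apply_apply_of_equicontinuousAt hg0 hg x)

variable [NormedSpace ℝ E] [NormedSpace ℝ F]

def shiftCLM : C₀(ℤ, E) →L[ℝ] C₀(ℤ, E) :=
  LinearMap.mkContinuous
    { toFun := fun x => ofTendstoCofinite (fun n => x (n + 1))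
        ((tendsto_cofinite x).comp (add_left_injective 1).tendsto_cofinite)
      map_add' := fun _ _ => rfl
      map_smul' := fun _ _ => rfl }
    1 fun x => by simpa using norm_le_of_forall_le (norm_nonneg x) fun n => norm_apply_le x (n + 1)

theorem tendsto_cofinite_apply_apply {A : ℤ → E →L[ℝ] F} (hA : BddAbove (range fun n => ‖A n‖))
    (x : C₀(ℤ, E)) : Tendsto (fun n => A n (x n)) cofinite (𝓝 0) := by
  obtain ⟨M, hM⟩ := hA
  refine squeeze_zero_norm (fun n => (A n).le_of_opNorm_le (hM ⟨n, rfl⟩) (x n)) ?_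
  simpa using (tendsto_cofinite x).norm.const_mul M

def mulCLM (A : ℤ → E →L[ℝ] F) (hA : BddAbove (range fun n => ‖A n‖)) :
    C₀(ℤ, E) →L[ℝ] C₀(ℤ, F) :=
  LinearMap.mkContinuousOfExistsBound
    { toFun := fun x => ofTendstoCofinite (fun n => A n (x n)) (tendsto_cofinite_apply_apply hA x)
      map_add' := fun x y => by ext n; exact map_add (A n) (x n) (y n)
      map_smul' := fun c x => by ext n; exact map_smul (A n) c (x n) } <| by
    obtain ⟨M, hM⟩ := hA
    have hM0 : 0 ≤ M := (norm_nonneg _).trans (hM ⟨0, rfl⟩)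
    exact ⟨M, fun x => norm_le_of_forall_le (by positivity) fun n =>
      (A n).le_of_opNorm_le (hM ⟨n, rfl⟩) (x n) |>.trans (by gcongr; exact norm_apply_le x n)⟩

theorem norm_mulCLM_sub_mulCLM_le {A B : ℤ → E →L[ℝ] F} (hA : BddAbove (range fun n => ‖A n‖))
    (hB : BddAbove (range fun n => ‖B n‖)) {ε : ℝ} (hε : 0 ≤ ε) (h : ∀ n, ‖A n - B n‖ ≤ ε) :
    ‖mulCLM A hA - mulCLM B hB‖ ≤ ε :=
  ContinuousLinearMap.opNorm_le_bound _ hε fun x => norm_le_of_forall_le (by positivity) fun n =>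
    calc ‖(A n - B n) (x n)‖ ≤ ‖A n - B n‖ * ‖x n‖ := (A n - B n).le_opNorm (x n)
      _ ≤ ε * ‖x‖ := mul_le_mul (h n) (norm_apply_le x n) (norm_nonneg _) hε

theorem continuous_mulCLM {X : Type*} [PseudoMetricSpace X] {G : ℤ → X → E → E →L[ℝ] F}
    (hG : ∀ R, UniformEquicontinuousOn (fun n (p : X × E) => G n p.1 p.2) (univ ×ˢ closedBall 0 R))
    (hbdd : ∀ p : X × C₀(ℤ, E), BddAbove (range fun n => ‖G n p.1 (p.2 n)‖)) :
    Continuous fun p : X × C₀(ℤ, E) => mulCLM (fun n => G n p.1 (p.2 n)) (hbdd p) := by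
  refine (Metric.continuous_iff (β := C₀(ℤ, E) →L[ℝ] C₀(ℤ, F))).2 fun p ε hε => ?_
  obtain ⟨a, x⟩ := p
  obtain ⟨δ, hδ, hGδ⟩ := Metric.uniformEquicontinuousOn_iff.1 (hG (‖x‖ + 1)) (ε / 2) (half_pos hε)
  refine ⟨min δ 1, lt_min hδ one_pos, fun q hd => ?_⟩
  obtain ⟨b, y⟩ := q
  rw [Prod.dist_eq, lt_min_iff, max_lt_iff, max_lt_iff] at hd
  have hy : ‖y‖ ≤ ‖x‖ + 1 := by
    linarith [norm_le_norm_add_norm_sub' y x, dist_eq_norm y x]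
  rw [dist_eq_norm (E := C₀(ℤ, E) →L[ℝ] C₀(ℤ, F))]
  refine (norm_mulCLM_sub_mulCLM_le _ _ (half_pos hε).le fun n => ?_).trans_lt (half_lt_self hε)
  rw [← dist_eq_norm]
  refine (hGδ (b, y n) ⟨trivial, ?_⟩ (a, x n) ⟨trivial, ?_⟩ ?_ n).le
  · exact mem_closedBall_zero_iff.2 ((norm_apply_le y n).trans hy)
  · exact mem_closedBall_zero_iff.2 ((norm_apply_le x n).trans (le_add_of_nonneg_right zero_le_one))
  · rw [Prod.dist_eq]
    exact max_lt hd.1.1 ((dist_apply_le y x n).trans_lt hd.1.2)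

theorem hasFDerivAt_nemytskii {g : ℤ → E → F} (hg0 : ∀ n, g n 0 = 0) (hg : EquicontinuousAt g 0)
    {A : ℤ → E → E →L[ℝ] F} (hgA : ∀ n u, HasFDerivAt (g n) (A n u) u) {x : C₀(ℤ, E)} {R : ℝ}
    (hA : UniformEquicontinuousOn A (closedBall 0 R)) (hxR : ‖x‖ < R)
    (hbdd : BddAbove (range fun n => ‖A n (x n)‖)) :
    HasFDerivAt (nemytskii g hg0 hg) (mulCLM (fun n => A n (x n)) hbdd) x := by
  rw [hasFDerivAt_iff_isLittleO_nhds_zero, Asymptotics.isLittleO_iff]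
  intro ε hε
  obtain ⟨δ, hδ, hAδ⟩ := Metric.uniformEquicontinuousOn_iff.1 hA ε hε
  filter_upwards [ball_mem_nhds 0 (lt_min hδ (sub_pos.2 hxR))] with h hh
  rw [mem_ball_zero_iff, lt_min_iff] at hh
  refine norm_le_of_forall_le (by positivity) fun n => ?_
  have hxn : ‖x n‖ ≤ ‖x‖ := norm_apply_le x n
  have hhn : ‖h n‖ ≤ ‖h‖ := norm_apply_le h n
  calc ‖g n (x n + h n) - g n (x n) - A n (x n) (h n)‖ ≤ ε * ‖h n‖ := by
        refine norm_image_add_sub_sub_le (hgA n) fun z hz => ?_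
        rw [mem_closedBall, dist_eq_norm] at hz
        rw [← dist_eq_norm]
        refine (hAδ z ?_ (x n) ?_ ?_ n).le
        · rw [mem_closedBall_zero_iff]
          linarith [norm_le_norm_add_norm_sub' z (x n)]
        · exact mem_closedBall_zero_iff.2 (by linarith)
        · rw [dist_eq_norm]
          linarith
    _ ≤ ε * ‖h‖ := by gcongr

end ZeroAtInftyContinuousMap

-- Matching the normed and the algebraic instance paths on `c0 N →L[ℝ] c0 N` is slow.
set_option maxHeartbeats 400000 in
open ZeroAtInftyContinuousMap in
theorem F_differentiable_general {N : ℕ} {Λ : Type*}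
    [MetricSpace Λ]
    (f : ℤ → Λ → (Fin N → ℝ) → (Fin N → ℝ))
    (Df : ℤ → Λ → (Fin N → ℝ) → ((Fin N → ℝ) →L[ℝ] (Fin N → ℝ)))
    (hdiff : ∀ (n : ℤ) (lam : Λ) (u : Fin N → ℝ), HasFDerivAt (f n lam) (Df n lam u) u)
    (hA1 : ∀ (n : ℤ) (lam : Λ), f n lam 0 = 0)
    (hA2 : ∀ K : Set (Fin N → ℝ), IsCompact K → ∀ ε > (0:ℝ), ∃ δ > (0:ℝ),
      ∀ (lam mu : Λ) (x y : Fin N → ℝ), x ∈ K → y ∈ K →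
        dist lam mu + ‖x - y‖ < δ →
          ∀ n : ℤ, ‖f n lam x - f n mu y‖ + ‖Df n lam x - Df n mu y‖ < ε)
    (hC0 : ∃ C : ℝ, ∀ (n : ℤ) (lam : Λ), ‖Df n lam 0‖ ≤ C) :
    ∃ (F : Λ → c0 N → c0 N) (T : Λ → c0 N → (c0 N →L[ℝ] c0 N)),
      (∀ (lam : Λ) (x : c0 N) (n : ℤ), F lam x n = x (n + 1) - f n lam (x n)) ∧
      (∀ (lam : Λ) (x y : c0 N) (n : ℤ),
        T lam x y n = y (n + 1) - Df n lam (x n) (y n)) ∧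
      (∀ (lam : Λ) (x : c0 N), HasFDerivAt (F lam) (T lam x) x) ∧
      Continuous (fun p : Λ × c0 N => T p.1 p.2) := by
  obtain ⟨C, hC⟩ := hC0
  have hequi (R : ℝ) :
      UniformEquicontinuousOn (fun n (p : Λ × (Fin N → ℝ)) => f n p.1 p.2)
        (univ ×ˢ closedBall 0 R) ∧
      UniformEquicontinuousOn (fun n (p : Λ × (Fin N → ℝ)) => Df n p.1 p.2)
        (univ ×ˢ closedBall 0 R) := by
    constructor <;> refine uniformEquicontinuousOn_prod_of_dist_add_dist_lt fun ε hε => ?_ <;>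
    · obtain ⟨δ, hδ, H⟩ := hA2 _ (isCompact_closedBall 0 R) ε hε
      refine ⟨δ, hδ, fun lam mu x y hx hy hd n => ?_⟩
      have := H lam mu x y hx hy (by rwa [← dist_eq_norm]) n
      rw [dist_eq_norm]
      linarith [norm_nonneg (f n lam x - f n mu y), norm_nonneg (Df n lam x - Df n mu y)]
  have hslice (lam : Λ) : UniformContinuous fun u : Fin N → ℝ => (lam, u) :=
    uniformContinuous_const.prodMk uniformContinuous_id
  have hDf (lam : Λ) (R : ℝ) : UniformEquicontinuousOn (fun n => Df n lam) (closedBall 0 R) :=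
    (hequi R).2.comp_uniformContinuous (hslice lam) fun _ hu => ⟨trivial, hu⟩
  have hf0 (lam : Λ) : EquicontinuousAt (fun n => f n lam) 0 :=
    ((hequi 1).1.comp_uniformContinuous (hslice lam) fun _ hu => ⟨trivial, hu⟩).equicontinuousAt
      (closedBall_mem_nhds 0 one_pos)
  have hbdd (p : Λ × c0 N) : BddAbove (range fun n => ‖Df n p.1 (p.2 n)‖) :=
    ((hDf p.1 1).equicontinuousAt (closedBall_mem_nhds 0 one_pos)).bddAbove_range_norm_apply
      ⟨C, forall_mem_range.2 fun n => hC n p.1⟩ (tendsto_cofinite p.2)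
  refine ⟨fun lam x => shiftCLM x - nemytskii (fun n => f n lam) (fun n => hA1 n lam) (hf0 lam) x,
    fun lam x => shiftCLM - mulCLM (fun n => Df n lam (x n)) (hbdd (lam, x)),
    fun _ _ _ => rfl, fun _ _ _ _ => rfl, fun lam x => ?_, ?_⟩
  · exact shiftCLM.hasFDerivAt.sub (hasFDerivAt_nemytskii (fun n => hA1 n lam) (hf0 lam)
      (fun n => hdiff n lam) (hDf lam (‖x‖ + 1)) (lt_add_one _) (hbdd (lam, x)))
  · exact continuous_const.sub (continuous_mulCLM (fun R => (hequi R).2) hbdd)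

/-- Under assumptions (A1), (A2) and boundedness of the derivatives along the trivial
branch, the map `F_λ : c₀(ℝ^N) → c₀(ℝ^N)`, `(F_λ x)ₙ = xₙ₊₁ - fₙ(λ,xₙ)`, is Fréchet
differentiable at every `x` with derivative `T_λ(x)`, `(T_λ(x)y)ₙ = yₙ₊₁ - Dfₙ(λ,xₙ)yₙ`,
and `(λ,x) ↦ T_λ(x)` is continuous in the operator norm. -/
theorem F_differentiable {N : ℕ} {Λ : Type*}
    [MetricSpace Λ] [CompactSpace Λ]
    (f : ℤ → Λ → (Fin N → ℝ) → (Fin N → ℝ))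
    (Df : ℤ → Λ → (Fin N → ℝ) → ((Fin N → ℝ) →L[ℝ] (Fin N → ℝ)))
    (hcont : ∀ n : ℤ, Continuous (fun p : Λ × (Fin N → ℝ) => f n p.1 p.2))
    (hdiff : ∀ (n : ℤ) (lam : Λ) (u : Fin N → ℝ), HasFDerivAt (f n lam) (Df n lam u) u)
    (hDcont : ∀ n : ℤ, Continuous (fun p : Λ × (Fin N → ℝ) => Df n p.1 p.2))
    (hA1 : ∀ (n : ℤ) (lam : Λ), f n lam 0 = 0)
    (hA2 : ∀ K : Set (Fin N → ℝ), IsCompact K → ∀ ε > (0:ℝ), ∃ δ > (0:ℝ),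
      ∀ (lam mu : Λ) (x y : Fin N → ℝ), x ∈ K → y ∈ K →
        dist lam mu + ‖x - y‖ < δ →
          ∀ n : ℤ, ‖f n lam x - f n mu y‖ + ‖Df n lam x - Df n mu y‖ < ε)
    (hC0 : ∃ C : ℝ, ∀ (n : ℤ) (lam : Λ), ‖Df n lam 0‖ ≤ C) :
    ∃ (F : Λ → c0 N → c0 N) (T : Λ → c0 N → (c0 N →L[ℝ] c0 N)),
      (∀ (lam : Λ) (x : c0 N) (n : ℤ), F lam x n = x (n + 1) - f n lam (x n)) ∧
      (∀ (lam : Λ) (x y : c0 N) (n : ℤ),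
        T lam x y n = y (n + 1) - Df n lam (x n) (y n)) ∧
      (∀ (lam : Λ) (x : c0 N), HasFDerivAt (F lam) (T lam x) x) ∧
      Continuous (fun p : Λ × c0 N => T p.1 p.2) :=
  F_differentiable_general f Df hdiff hA1 hA2 hC0

end
end

section
/- Let X be a Banach space, U a topological space, δ > 0, and φ : U×X → X a continuous map such that φ(λ,0) = 0 for all λ ∈ U, each φ_λ = φ(λ,·) is Fréchet differentiable on the open ball B(0,δ), and ‖I_X − Dφ_λ(x)‖ ≤ 1/2 for all x ∈ B(0,δ) and λ ∈ U. Then for every λ ∈ U and every y in the open ball B(0,δ/2) there exists a unique x in the closed ball B̄(0,δ) with φ_λ(x) = y; this x lies in B(0,δ), and the map (λ,y) ↦ x from U×B(0,δ/2) to X is continuous. -/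
/-!
Write `φ_λ = I - (I - φ_λ)`. The mean value inequality makes `I - φ_λ` a `1/2`-Lipschitz map on
`B(0,δ)`, hence, by continuity, on `B̄(0,δ)`. Therefore `(1/2)‖x - x'‖ ≤ ‖φ_λ x - φ_λ x'‖` there,
which gives injectivity, the bound `‖x‖ ≤ 2‖φ_λ x‖` placing the solution in the open ball, and
continuity of the inverse: `(1/2)‖x_{λ,y} - x_{λ₀,y₀}‖ ≤ ‖y - φ_λ(x_{λ₀,y₀})‖`, which tends to
`‖y₀ - φ_{λ₀}(x_{λ₀,y₀})‖ = 0`. Surjectivity onto `B(0,δ/2)` is the contraction mapping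
principle applied to `x ↦ y + x - φ_λ(x)`.
-/

open Filter Metric NNReal Set Function Topology

theorem approximatesLinearOn_closedBall_of_hasFDerivAt
    {E F : Type*} [NormedAddCommGroup E] [NormedSpace ℝ E] [NormedAddCommGroup F]
    [NormedSpace ℝ F] {f : E → F} {f' : E → E →L[ℝ] F} {A : E →L[ℝ] F} {c : E} {r : ℝ}
    {K : ℝ≥0} (hr : r ≠ 0) (hcont : ContinuousOn f (closedBall c r))
    (hf : ∀ x ∈ ball c r, HasFDerivAt f (f' x) x) (hK : ∀ x ∈ ball c r, ‖f' x - A‖ ≤ K) :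
    ApproximatesLinearOn f A (closedBall c r) K := by
  rw [ApproximatesLinearOn.approximatesLinearOn_iff_lipschitzOnWith, ← closure_ball c hr]
  refine LipschitzOnWith.closure ?_ ?_
  · rw [closure_ball c hr]
    exact hcont.sub A.continuous.continuousOn
  · exact (convex_ball c r).lipschitzOnWith_of_nnnorm_hasFDerivWithin_le
      (fun x hx => ((hf x hx).sub A.hasFDerivAt).hasFDerivWithinAt)
      (fun x hx => by exact_mod_cast hK x hx)

section PerturbationOfIdentity

variable {𝕜 : Type*} [NontriviallyNormedField 𝕜] {E : Type*} [NormedAddCommGroup E]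
  [NormedSpace 𝕜 E] {f : E → E} {s : Set E} {K : ℝ≥0}

theorem ApproximatesLinearOn.one_sub_mul_norm_sub_le
    (hf : ApproximatesLinearOn f (ContinuousLinearMap.id 𝕜 E) s K)
    {x y : E} (hx : x ∈ s) (hy : y ∈ s) :
    (1 - K) * ‖x - y‖ ≤ ‖f x - f y‖ := by
  have h := hf x hx y hy
  have := norm_le_norm_add_norm_sub' (x - y) (f x - f y)
  rw [ContinuousLinearMap.id_apply, ← norm_neg, neg_sub] at h
  linarith

theorem ApproximatesLinearOn.injOn_of_id
    (hf : ApproximatesLinearOn f (ContinuousLinearMap.id 𝕜 E) s K) (hK : K < 1) :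
    InjOn f s := fun x hx y hy hxy => by
  have h := hf.one_sub_mul_norm_sub_le hx hy
  rw [hxy, sub_self, norm_zero] at h
  have hK' : (0 : ℝ) < 1 - K := sub_pos.2 (by exact_mod_cast hK)
  exact sub_eq_zero.1 (norm_le_zero_iff.1 (nonpos_of_mul_nonpos_right h hK'))

theorem ApproximatesLinearOn.surjOn_closedBall_of_id [CompleteSpace E] {b : E} {r : ℝ}
    (hf : ApproximatesLinearOn f (ContinuousLinearMap.id 𝕜 E) (closedBall b r) K) (hr : 0 ≤ r) :
    SurjOn f (closedBall b r) (closedBall (f b) ((1 - K) * r)) := by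
  rcases subsingleton_or_nontrivial E with hE | hE
  · exact fun y _ => ⟨b, mem_closedBall_self hr, Subsingleton.elim _ _⟩
  · simpa [ContinuousLinearEquiv.toNonlinearRightInverse] using
      hf.surjOn_closedBall_of_nonlinearRightInverse
        (ContinuousLinearEquiv.refl 𝕜 E).toNonlinearRightInverse hr subset_rfl

theorem ApproximatesLinearOn.invFunOn_closedBall_of_id [CompleteSpace E] {r : ℝ}
    (hf : ApproximatesLinearOn f (ContinuousLinearMap.id 𝕜 E) (closedBall 0 r) K) (hK : K < 1)
    (hf0 : f 0 = 0) {y : E} (hy : y ∈ ball 0 ((1 - K) * r)) :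
    invFunOn f (closedBall 0 r) y ∈ ball 0 r ∧ f (invFunOn f (closedBall 0 r) y) = y := by
  have hK' : (0 : ℝ) < 1 - K := sub_pos.2 (by exact_mod_cast hK)
  rw [mem_ball_zero_iff] at hy
  have hr : 0 < r := pos_of_mul_pos_right ((norm_nonneg y).trans_lt hy) hK'.le
  have hy' : y ∈ f '' closedBall 0 r := by
    refine hf.surjOn_closedBall_of_id hr.le ?_
    rw [hf0, mem_closedBall_zero_iff]
    exact hy.le
  obtain ⟨hmem, hinv⟩ := invFunOn_pos hy'
  refine ⟨?_, hinv⟩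
  have hbound := hf.one_sub_mul_norm_sub_le hmem (mem_closedBall_self hr.le)
  rw [hinv, hf0, sub_zero, sub_zero] at hbound
  rw [mem_ball_zero_iff]
  exact lt_of_mul_lt_mul_left (hbound.trans_lt hy) hK'.le

theorem continuousOn_of_approximatesLinearOn_id_of_rightInverse {U : Type*} [TopologicalSpace U]
    {φ : U → E → E} (hK : K < 1)
    (hφ : ∀ lam, ApproximatesLinearOn (φ lam) (ContinuousLinearMap.id 𝕜 E) s K)
    (hcont : ∀ x ∈ s, Continuous fun lam => φ lam x)
    {g : U → E → E} {t : Set (U × E)} (hgs : ∀ p ∈ t, g p.1 p.2 ∈ s)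
    (hg : ∀ p ∈ t, φ p.1 (g p.1 p.2) = p.2) :
    ContinuousOn (fun p : U × E => g p.1 p.2) t := by
  intro p₀ hp₀
  set x₀ := g p₀.1 p₀.2
  have hK' : (0 : ℝ) < 1 - K := sub_pos.2 (by exact_mod_cast hK)
  have hbound : ∀ p ∈ t, ‖g p.1 p.2 - x₀‖ ≤ (1 - (K : ℝ))⁻¹ * ‖p.2 - φ p.1 x₀‖ := fun p hp => by
    rw [le_inv_mul_iff₀ hK']
    simpa only [hg p hp] using (hφ p.1).one_sub_mul_norm_sub_le (hgs p hp) (hgs p₀ hp₀)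
  have hlim : Tendsto (fun p : U × E => (1 - (K : ℝ))⁻¹ * ‖p.2 - φ p.1 x₀‖) (𝓝 p₀) (𝓝 0) :=
    (continuous_const.mul
      (continuous_snd.sub ((hcont x₀ (hgs p₀ hp₀)).comp continuous_fst)).norm).tendsto' p₀ 0
      (by simp [x₀, hg p₀ hp₀])
  rw [ContinuousWithinAt, tendsto_iff_norm_sub_tendsto_zero]
  exact squeeze_zero' (Eventually.of_forall fun _ => norm_nonneg _)
    (eventually_nhdsWithin_of_forall hbound) (hlim.mono_left nhdsWithin_le_nhds)

end PerturbationOfIdentity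

/-- If `φ : U × X → X` is continuous with `φ(λ,0) = 0`, each `φ_λ` is differentiable on
`B(0,δ)` with `‖I - Dφ_λ(x)‖ ≤ 1/2` there, then for every `λ` and every
`y ∈ B(0,δ/2)` there is a unique `x ∈ B̄(0,δ)` with `φ_λ(x) = y`; this `x` lies in
`B(0,δ)` and depends continuously on `(λ,y)`. -/
theorem local_inversion_with_parameters {X U : Type*}
    [NormedAddCommGroup X] [NormedSpace ℝ X] [CompleteSpace X]
    [TopologicalSpace U]
    (δ : ℝ) (hδ : 0 < δ)
    (φ : U × X → X) (hφcont : Continuous φ)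
    (hφ0 : ∀ lam : U, φ (lam, 0) = 0)
    (D : U → X → (X →L[ℝ] X))
    (hD : ∀ (lam : U), ∀ x ∈ ball (0 : X) δ,
      HasFDerivAt (fun v => φ (lam, v)) (D lam x) x)
    (hDbound : ∀ (lam : U), ∀ x ∈ ball (0 : X) δ,
      ‖ContinuousLinearMap.id ℝ X - D lam x‖ ≤ 1 / 2) :
    ∃ g : U → X → X,
      (∀ (lam : U), ∀ y ∈ ball (0 : X) (δ / 2),
        g lam y ∈ ball (0 : X) δ ∧
        φ (lam, g lam y) = y ∧
        ∀ x ∈ closedBall (0 : X) δ, φ (lam, x) = y → x = g lam y) ∧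
      ContinuousOn (fun p : U × X => g p.1 p.2) (Set.univ ×ˢ ball (0 : X) (δ / 2)) := by
  have hK : (2⁻¹ : ℝ≥0) < 1 := by norm_num
  have happrox : ∀ lam, ApproximatesLinearOn (fun x => φ (lam, x)) (ContinuousLinearMap.id ℝ X)
      (closedBall 0 δ) 2⁻¹ := fun lam =>
    approximatesLinearOn_closedBall_of_hasFDerivAt hδ.ne'
      (hφcont.comp (Continuous.prodMk_right lam)).continuousOn (hD lam)
      (fun x hx => by simpa [norm_sub_rev] using hDbound lam x hx)
  set g : U → X → X := fun lam => invFunOn (fun x => φ (lam, x)) (closedBall 0 δ)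
  have hg : ∀ lam, ∀ y ∈ ball (0 : X) (δ / 2), g lam y ∈ ball 0 δ ∧ φ (lam, g lam y) = y :=
    fun lam y hy => (happrox lam).invFunOn_closedBall_of_id hK (hφ0 lam)
      (by convert hy using 2; norm_num; ring)
  refine ⟨g, fun lam y hy => ⟨(hg lam y hy).1, (hg lam y hy).2, fun x hx hxy => ?_⟩, ?_⟩
  · exact (happrox lam).injOn_of_id hK hx (ball_subset_closedBall (hg lam y hy).1)
      (hxy.trans (hg lam y hy).2.symm)
  · exact continuousOn_of_approximatesLinearOn_id_of_rightInverse hK happrox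
      (fun x _ => hφcont.comp (Continuous.prodMk_left x))
      (fun p hp => ball_subset_closedBall (hg p.1 p.2 hp.2).1) (fun p hp => (hg p.1 p.2 hp.2).2)
end

section
/- For s ∈ ℝ let a(s) be the 4×4 real matrix whose upper-left 2×2 block is [[1/2 + (3/2)sin²(s/2), −(3/4)sin s], [−(3/4)sin s, 1/2 + (3/2)cos²(s/2)]], whose lower-right 2×2 block is diag(1/2, 2), and whose off-diagonal blocks vanish; let a₋ = diag(1/2, 2, 2, 1/2); and let h : ℝ⁴ → ℝ⁴ be h(u) = (0, 0, 0, ‖u‖²). Set a_n = a(s) for n ≥ 0 and a_n = a₋ for n < 0. Then for every s ∈ ℝ, the only sequence x ∈ c₀(ℝ⁴) satisfying x_{n+1} = a_n x_n + h(x_n) for all n ∈ ℤ is x = 0. -/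
open Filter Matrix

noncomputable section

/-- The space `c₀(ℝ⁴)` of two-sided sequences in `ℝ⁴` vanishing at `±∞`, with sup norm. -/
abbrev c0four := ZeroAtInftyContinuousMap ℤ (Fin 4 → ℝ)

/-- The matrix `a(s)` of the example in Section 7. -/
def aMat (s : ℝ) : Matrix (Fin 4) (Fin 4) ℝ :=
  !![1/2 + 3/2 * Real.sin (s/2) ^ 2, -(3/4) * Real.sin s, 0, 0;
     -(3/4) * Real.sin s, 1/2 + 3/2 * Real.cos (s/2) ^ 2, 0, 0;
     0, 0, 1/2, 0;
     0, 0, 0, 2]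

/-- The matrix `a₋ = diag(1/2, 2, 2, 1/2)`. -/
def aMinus : Matrix (Fin 4) (Fin 4) ℝ :=
  !![1/2, 0, 0, 0;
     0, 2, 0, 0;
     0, 0, 2, 0;
     0, 0, 0, 1/2]

/-- The nonlinearity `h(u) = (0,0,0,‖u‖²)`, with `‖·‖` the Euclidean norm on `ℝ⁴`. -/
def hMap (u : Fin 4 → ℝ) : Fin 4 → ℝ := ![0, 0, 0, ∑ i, (u i) ^ 2]

/-- For every `s`, the only solution `x ∈ c₀(ℝ⁴)` of
`xₙ₊₁ = aₙ xₙ + h(xₙ)`, with `aₙ = a(s)` for `n ≥ 0` and `aₙ = a₋` for `n < 0`,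
is the trivial one. -/
theorem only_trivial_solution_of_example (s : ℝ) (x : c0four)
    (hx : ∀ n : ℤ,
      x (n + 1) = (if 0 ≤ n then aMat s else aMinus).mulVec (x n) + hMap (x n)) :
    x = 0 := by
  set z : ℤ → ℝ := fun n => x n 3 with hzdef
  set c : ℤ → ℝ := fun n => ∑ i, (x n i) ^ 2 with hcdef
  have hcnn : ∀ n, 0 ≤ c n := fun n => Finset.sum_nonneg fun i _ => sq_nonneg _
  have key : ∀ n : ℤ, z (n + 1) = (if 0 ≤ n then 2 else 1/2) * z n + c n := by
    intro n
    have h := congrFun (hx n) 3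
    by_cases hn : 0 ≤ n <;>
      simp only [hn, if_true, if_false] at h ⊢ <;>
      · rw [hzdef, hcdef]
        simp only []
        rw [h]
        simp [aMat, aMinus, hMap, Matrix.mulVec, dotProduct, Fin.sum_univ_four]
  -- boundedness
  obtain ⟨M, hM⟩ : ∃ M : ℝ, ∀ n, |z n| ≤ M := by
    refine ⟨‖x.toBCF‖, fun n => ?_⟩
    have h1 : ‖x n 3‖ ≤ ‖x n‖ := norm_le_pi_norm (x n) 3
    have h2 : ‖x.toBCF n‖ ≤ ‖x.toBCF‖ := x.toBCF.norm_coe_le_norm n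
    simp only [ZeroAtInftyContinuousMap.toBCF_apply] at h2
    rw [Real.norm_eq_abs] at h1
    exact h1.trans h2
  -- Step A : z n ≥ 0 for n ≤ 0
  have hA : ∀ n : ℤ, n ≤ 0 → 0 ≤ z n := by
    intro m hm
    by_contra hneg
    push_neg at hneg
    have hiter : ∀ k : ℕ, z (m - k) ≤ 2 ^ k * z m := by
      intro k
      induction k with
      | zero => simp
      | succ k ih =>
        have hlt : ¬ (0 ≤ m - ((k : ℤ) + 1)) := by omega
        have hk := key (m - ((k : ℤ) + 1))
        rw [if_neg hlt] at hk
        have heq : m - ((k : ℤ) + 1) + 1 = m - k := by ring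
        rw [heq] at hk
        have h2 := hcnn (m - ((k : ℤ) + 1))
        have hp : (2 : ℝ) ^ (k + 1) = 2 * 2 ^ k := by ring
        push_cast
        rw [hp]
        linarith
    obtain ⟨k, hk⟩ : ∃ k : ℕ, M < 2 ^ k * (-z m) := by
      obtain ⟨k, hk⟩ := pow_unbounded_of_one_lt (M / (-z m)) (by norm_num : (1:ℝ) < 2)
      exact ⟨k, (div_lt_iff₀ (by linarith)).mp hk⟩
    have h1 := hiter k
    have h2 := (abs_le.mp (hM (m - k))).1
    linarith
  -- Step B : z n ≤ 0 for n ≥ 0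
  have hB : ∀ n : ℤ, 0 ≤ n → z n ≤ 0 := by
    intro m hm
    by_contra hpos
    push_neg at hpos
    have hiter : ∀ k : ℕ, 2 ^ k * z m ≤ z (m + k) := by
      intro k
      induction k with
      | zero => simp
      | succ k ih =>
        have hge : (0 : ℤ) ≤ m + k := by omega
        have hk := key (m + k)
        rw [if_pos hge] at hk
        have heq : m + (k : ℤ) + 1 = m + ((k : ℤ) + 1) := by ring
        rw [heq] at hk
        have h2 := hcnn (m + k)
        have hp : (2 : ℝ) ^ (k + 1) = 2 * 2 ^ k := by ring
        push_cast
        rw [hp]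
        linarith
    obtain ⟨k, hk⟩ : ∃ k : ℕ, M < 2 ^ k * z m := by
      obtain ⟨k, hk⟩ := pow_unbounded_of_one_lt (M / z m) (by norm_num : (1:ℝ) < 2)
      exact ⟨k, (div_lt_iff₀ hpos).mp hk⟩
    have h1 := hiter k
    have h2 := (abs_le.mp (hM (m + k))).2
    linarith
  -- z vanishes on nonnegative integers
  have hzpos : ∀ k : ℕ, z k = 0 := by
    intro k
    induction k with
    | zero => exact le_antisymm (hB 0 le_rfl) (hA 0 le_rfl)
    | succ k ih =>
      have hk := key k
      rw [if_pos (by positivity : (0:ℤ) ≤ (k:ℤ))] at hk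
      have h1 := hcnn (k : ℤ)
      have h2 := hB ((k : ℤ) + 1) (by positivity)
      push_cast
      linarith
  -- z vanishes on nonpositive integers
  have hzneg : ∀ k : ℕ, z (-(k : ℤ)) = 0 := by
    intro k
    induction k with
    | zero => simpa using hzpos 0
    | succ k ih =>
      have hlt : ¬ (0 ≤ -((k : ℤ) + 1)) := by omega
      have hk := key (-((k : ℤ) + 1))
      rw [if_neg hlt] at hk
      have heq : -((k : ℤ) + 1) + 1 = -(k : ℤ) := by ring
      rw [heq, ih] at hk
      have h1 := hcnn (-((k : ℤ) + 1))
      have h2 := hA (-((k : ℤ) + 1)) (by omega)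
      push_cast
      linarith
  have hzall : ∀ n : ℤ, z n = 0 := by
    intro n
    rcases le_or_gt 0 n with h | h
    · obtain ⟨k, rfl⟩ := Int.eq_ofNat_of_zero_le h
      exact hzpos k
    · obtain ⟨k, rfl⟩ : ∃ k : ℕ, n = -(k : ℤ) := ⟨(-n).toNat, by omega⟩
      exact hzneg k
  have hcall : ∀ n : ℤ, c n = 0 := by
    intro n
    have hk := key n
    rw [hzall n, hzall (n + 1)] at hk
    by_cases hn : 0 ≤ n <;> simp [hn] at hk <;> linarith [hk]
  apply DFunLike.ext
  intro n
  funext i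
  have hc := hcall n
  rw [hcdef] at hc
  simp only [] at hc
  have := (Finset.sum_eq_zero_iff_of_nonneg (fun i _ => sq_nonneg (x n i))).mp hc i
    (Finset.mem_univ i)
  have hxi : x n i = 0 := by
    have := pow_eq_zero_iff (n := 2) (by norm_num) |>.mp (this)
    exact this
  simpa using hxi

end
end
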